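/- Let y ∈ ℝⁿ and λ_F ≥ 0, λ_NI ≥ 0, and let 0 ≤ λ_L < λ_L*. If the unique minimizer of the one-dimensional fused lasso nearly-isotonic objective satisfies β̂(y, λ_F, λ_L, λ_NI)_i = β̂(y, λ_F, λ_L, λ_NI)_{i+1} for some index 1 ≤ i ≤ n−1, then also β̂(y, λ_F, λ_L*, λ_NI)_i = β̂(y, λ_F, λ_L*, λ_NI)_{i+1}; that is, increasing the lasso parameter λ_L can only join constant regions of the solution, not split them. -/
import Mathlib


open Finset

open Filter Topology

/-- The one-dimensional fused lasso nearly-isotonic objective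
`F(β) = (1/2)Σᵢ(yᵢ−βᵢ)² + λ_F Σᵢ|βᵢ−βᵢ₊₁| + λ_L Σᵢ|βᵢ| + λ_NI Σᵢ max(βᵢ−βᵢ₊₁,0)`. -/
noncomputable def flni1 {n : ℕ} (y : Fin (n + 1) → ℝ) (lF lL lNI : ℝ)
    (β : Fin (n + 1) → ℝ) : ℝ :=
  (1 / 2) * ∑ i, (y i - β i) ^ 2
    + lF * ∑ i : Fin n, |β i.castSucc - β i.succ|
    + lL * ∑ i, |β i|
    + lNI * ∑ i : Fin n, max (β i.castSucc - β i.succ) 0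


/-- one-sided directional derivative of `|·|` at `x` in direction `v`. -/
noncomputable def dabs (x v : ℝ) : ℝ := if 0 < x then v else if x < 0 then -v else |v|

/-- one-sided directional derivative of `max · 0` at `x` in direction `v`. -/
noncomputable def dmax (x v : ℝ) : ℝ := if 0 < x then v else if x < 0 then 0 else max v 0

/-- soft-thresholding. -/
noncomputable def st (δ x : ℝ) : ℝ := if δ < x then x - δ else if x < -δ then x + δ else 0

lemma dabs_pos {x : ℝ} (h : 0 < x) (v : ℝ) : dabs x v = v := by rw [dabs, if_pos h]
lemma dabs_neg {x : ℝ} (h : x < 0) (v : ℝ) : dabs x v = -v := by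
  rw [dabs, if_neg (by linarith), if_pos h]
lemma dabs_zero (v : ℝ) : dabs 0 v = |v| := by rw [dabs]; norm_num
lemma dmax_pos {x : ℝ} (h : 0 < x) (v : ℝ) : dmax x v = v := by rw [dmax, if_pos h]
lemma dmax_neg {x : ℝ} (h : x < 0) (v : ℝ) : dmax x v = 0 := by
  rw [dmax, if_neg (by linarith), if_pos h]
lemma dmax_zero (v : ℝ) : dmax 0 v = max v 0 := by rw [dmax]; norm_num

lemma dabs_le_abs (x v : ℝ) : dabs x v ≤ |v| := by
  unfold dabs; split_ifs
  · exact le_abs_self v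
  · exact neg_le_abs v
  · exact le_rfl

lemma dmax_le_max (x v : ℝ) : dmax x v ≤ max v 0 := by
  unfold dmax; split_ifs
  · exact le_max_left _ _
  · exact le_max_right _ _
  · exact le_rfl

lemma abs_ge_dabs (c β : ℝ) : |c| + dabs c (β - c) ≤ |β| := by
  rcases lt_trichotomy c 0 with h | h | h
  · rw [dabs_neg h, abs_of_neg h]; have := neg_le_abs β; linarith
  · subst h; simp [dabs_zero]
  · rw [dabs_pos h, abs_of_pos h]; have := le_abs_self β; linarith

lemma max_ge_dmax (c β : ℝ) : max c 0 + dmax c (β - c) ≤ max β 0 := by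
  rcases lt_trichotomy c 0 with h | h | h
  · rw [dmax_neg h, max_eq_right h.le]; simp
  · subst h; simp [dmax_zero]
  · rw [dmax_pos h, max_eq_left h.le]; have := le_max_left β (0:ℝ); linarith

lemma st_mono {δ : ℝ} (hδ : 0 ≤ δ) : Monotone (st δ) := by
  intro x y h
  unfold st; split_ifs <;> linarith

lemma st_pos {δ x : ℝ} (hδ : 0 ≤ δ) (h : 0 < st δ x) : 0 < x := by
  unfold st at h; split_ifs at h with h1 h2 <;> linarith

lemma st_neg {δ x : ℝ} (hδ : 0 ≤ δ) (h : st δ x < 0) : x < 0 := by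
  unfold st at h; split_ifs at h with h1 h2 <;> linarith

lemma dabs_st_ge {δ : ℝ} (hδ : 0 ≤ δ) (x v : ℝ) : dabs x v ≤ dabs (st δ x) v := by
  rcases lt_trichotomy (st δ x) 0 with h | h | h
  · rw [dabs_neg h, dabs_neg (st_neg hδ h)]
  · rw [h, dabs_zero]; exact dabs_le_abs x v
  · rw [dabs_pos h, dabs_pos (st_pos hδ h)]

lemma dabs_st_pair {δ : ℝ} (hδ : 0 ≤ δ) (x y e : ℝ) :
    dabs (x - y) e ≤ dabs (st δ x - st δ y) e := by
  rcases lt_trichotomy (st δ x - st δ y) 0 with h | h | h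
  · have hxy : x - y < 0 := by
      by_contra hc
      have := st_mono hδ (by linarith [not_lt.1 hc] : y ≤ x)
      linarith
    rw [dabs_neg h, dabs_neg hxy]
  · rw [h, dabs_zero]; exact dabs_le_abs _ e
  · have hxy : 0 < x - y := by
      by_contra hc
      have := st_mono hδ (by linarith [not_lt.1 hc] : x ≤ y)
      linarith
    rw [dabs_pos h, dabs_pos hxy]

lemma dmax_st_pair {δ : ℝ} (hδ : 0 ≤ δ) (x y e : ℝ) :
    dmax (x - y) e ≤ dmax (st δ x - st δ y) e := by
  rcases lt_trichotomy (st δ x - st δ y) 0 with h | h | h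
  · have hxy : x - y < 0 := by
      by_contra hc
      have := st_mono hδ (by linarith [not_lt.1 hc] : y ≤ x)
      linarith
    rw [dmax_neg h, dmax_neg hxy]
  · rw [h, dmax_zero]; exact dmax_le_max _ e
  · have hxy : 0 < x - y := by
      by_contra hc
      have := st_mono hδ (by linarith [not_lt.1 hc] : x ≤ y)
      linarith
    rw [dmax_pos h, dmax_pos hxy]

lemma st_key {δ lL : ℝ} (hδ : 0 ≤ δ) (hL : 0 ≤ lL) (x v : ℝ) :
    lL * dabs x v + (x - st δ x) * v ≤ (lL + δ) * dabs (st δ x) v := by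
  have ha : lL * dabs x v ≤ lL * dabs (st δ x) v :=
    mul_le_mul_of_nonneg_left (dabs_st_ge hδ x v) hL
  have hb : (x - st δ x) * v ≤ δ * dabs (st δ x) v := by
    unfold st; split_ifs with h1 h2
    · rw [dabs_pos (by linarith : (0:ℝ) < x - δ)]; ring_nf; rfl
    · rw [dabs_neg (by linarith : x + δ < 0)]; nlinarith [le_refl v]
    · rw [dabs_zero, sub_zero]
      calc x * v ≤ |x * v| := le_abs_self _
        _ = |x| * |v| := abs_mul x v
        _ ≤ δ * |v| :=
          mul_le_mul_of_nonneg_right (abs_le.2 ⟨by linarith, by linarith⟩) (abs_nonneg v)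
  calc lL * dabs x v + (x - st δ x) * v ≤ lL * dabs (st δ x) v + δ * dabs (st δ x) v := by
        linarith
    _ = (lL + δ) * dabs (st δ x) v := by ring

lemma tmul_tendsto (v : ℝ) : Tendsto (fun t : ℝ => t * |v|) (𝓝[>] 0) (𝓝 0) := by
  have : Tendsto (fun t : ℝ => t * |v|) (𝓝 0) (𝓝 (0 * |v|)) :=
    (continuous_id.mul continuous_const).tendsto 0
  simpa using this.mono_left nhdsWithin_le_nhds

-- eventual expansion of |b + t v|
lemma abs_ev (b v : ℝ) : ∀ᶠ t in 𝓝[>] (0:ℝ), |b + t * v| = |b| + t * dabs b v := by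
  rcases lt_trichotomy b 0 with h | h | h
  · filter_upwards [(tmul_tendsto v).eventually_lt_const (show (0:ℝ) < -b by linarith),
      self_mem_nhdsWithin] with t ht ht0
    have habs : t * v ≤ t * |v| := mul_le_mul_of_nonneg_left (le_abs_self v) (le_of_lt ht0)
    have h2 : b + t * v < 0 := by linarith
    rw [abs_of_neg h2, abs_of_neg h, dabs_neg h]; ring
  · subst h
    filter_upwards [self_mem_nhdsWithin] with t ht0
    rw [zero_add, abs_mul, abs_of_pos ht0, dabs_zero]
    simp
  · filter_upwards [(tmul_tendsto v).eventually_lt_const h, self_mem_nhdsWithin] with t ht ht0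
    have habs : -(t * |v|) ≤ t * v := by
      have := mul_le_mul_of_nonneg_left (neg_abs_le v) (le_of_lt ht0)
      simpa [mul_neg] using this
    have h2 : 0 < b + t * v := by linarith
    rw [abs_of_pos h2, abs_of_pos h, dabs_pos h]

lemma max_ev (b v : ℝ) : ∀ᶠ t in 𝓝[>] (0:ℝ), max (b + t * v) 0 = max b 0 + t * dmax b v := by
  rcases lt_trichotomy b 0 with h | h | h
  · filter_upwards [(tmul_tendsto v).eventually_lt_const (show (0:ℝ) < -b by linarith),
      self_mem_nhdsWithin] with t ht ht0
    have habs : t * v ≤ t * |v| := mul_le_mul_of_nonneg_left (le_abs_self v) (le_of_lt ht0)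
    have h2 : b + t * v < 0 := by linarith
    rw [max_eq_right h2.le, max_eq_right h.le, dmax_neg h]; ring
  · subst h
    filter_upwards [self_mem_nhdsWithin] with t ht0
    rw [zero_add, dmax_zero, max_self, zero_add, mul_max_of_nonneg _ _ ht0.le, mul_zero]
  · filter_upwards [(tmul_tendsto v).eventually_lt_const h, self_mem_nhdsWithin] with t ht ht0
    have habs : -(t * |v|) ≤ t * v := by
      have := mul_le_mul_of_nonneg_left (neg_abs_le v) (le_of_lt ht0)
      simpa [mul_neg] using this
    have h2 : 0 < b + t * v := by linarith
    rw [max_eq_left h2.le, max_eq_left h.le, dmax_pos h]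


noncomputable def Phi {n : ℕ} (y : Fin (n + 1) → ℝ) (lF lL lNI : ℝ)
    (β d : Fin (n + 1) → ℝ) : ℝ :=
  ∑ i, (β i - y i) * d i
    + lF * ∑ i : Fin n, dabs (β i.castSucc - β i.succ) (d i.castSucc - d i.succ)
    + lL * ∑ i, dabs (β i) (d i)
    + lNI * ∑ i : Fin n, dmax (β i.castSucc - β i.succ) (d i.castSucc - d i.succ)


lemma flni1_ge {n : ℕ} (y : Fin (n + 1) → ℝ) {lF lL lNI : ℝ}
    (hF : 0 ≤ lF) (hL : 0 ≤ lL) (hNI : 0 ≤ lNI) (β c : Fin (n + 1) → ℝ) :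
    flni1 y lF lL lNI c + Phi y lF lL lNI c (fun i => β i - c i) ≤ flni1 y lF lL lNI β := by
  have S1 : ∑ i, ((y i - c i) ^ 2 + 2 * ((c i - y i) * (β i - c i))) ≤ ∑ i, (y i - β i) ^ 2 :=
    Finset.sum_le_sum fun i _ => by nlinarith [sq_nonneg (β i - c i)]
  have S2 : ∑ i : Fin n, (|c i.castSucc - c i.succ|
        + dabs (c i.castSucc - c i.succ)
          ((β i.castSucc - c i.castSucc) - (β i.succ - c i.succ)))
      ≤ ∑ i : Fin n, |β i.castSucc - β i.succ| := by
    refine Finset.sum_le_sum fun i _ => ?_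
    have h := abs_ge_dabs (c i.castSucc - c i.succ) (β i.castSucc - β i.succ)
    rw [show β i.castSucc - β i.succ - (c i.castSucc - c i.succ)
        = (β i.castSucc - c i.castSucc) - (β i.succ - c i.succ) from by ring] at h
    exact h
  have S3 : ∑ i, (|c i| + dabs (c i) (β i - c i)) ≤ ∑ i, |β i| :=
    Finset.sum_le_sum fun i _ => abs_ge_dabs (c i) (β i)
  have S4 : ∑ i : Fin n, (max (c i.castSucc - c i.succ) 0
        + dmax (c i.castSucc - c i.succ)
          ((β i.castSucc - c i.castSucc) - (β i.succ - c i.succ)))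
      ≤ ∑ i : Fin n, max (β i.castSucc - β i.succ) 0 := by
    refine Finset.sum_le_sum fun i _ => ?_
    have h := max_ge_dmax (c i.castSucc - c i.succ) (β i.castSucc - β i.succ)
    rw [show β i.castSucc - β i.succ - (c i.castSucc - c i.succ)
        = (β i.castSucc - c i.castSucc) - (β i.succ - c i.succ) from by ring] at h
    exact h
  have m1 := mul_le_mul_of_nonneg_left S1 (by norm_num : (0:ℝ) ≤ 1 / 2)
  have m2 := mul_le_mul_of_nonneg_left S2 hF
  have m3 := mul_le_mul_of_nonneg_left S3 hL
  have m4 := mul_le_mul_of_nonneg_left S4 hNI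
  simp only [Finset.sum_add_distrib, Finset.mul_sum] at m1 m2 m3 m4 ⊢
  unfold flni1 Phi
  simp only [Finset.sum_add_distrib, Finset.mul_sum, mul_add] at *
  ring_nf
  ring_nf at m1 m2 m3 m4
  linarith


lemma phi_nonneg {n : ℕ} {y : Fin (n + 1) → ℝ} {lF lL lNI : ℝ} {b : Fin (n + 1) → ℝ}
    (hb : ∀ β, flni1 y lF lL lNI b ≤ flni1 y lF lL lNI β) (d : Fin (n + 1) → ℝ) :
    0 ≤ Phi y lF lL lNI b d := by
  have hev : ∀ᶠ t in 𝓝[>] (0:ℝ),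
      flni1 y lF lL lNI (fun i => b i + t * d i)
        = flni1 y lF lL lNI b + t * Phi y lF lL lNI b d
          + t ^ 2 * ((1 / 2) * ∑ i, d i ^ 2) := by
    have H1 : ∀ᶠ t in 𝓝[>] (0:ℝ), ∀ i : Fin (n + 1),
        |b i + t * d i| = |b i| + t * dabs (b i) (d i) :=
      eventually_all.2 fun i => abs_ev (b i) (d i)
    have H2 : ∀ᶠ t in 𝓝[>] (0:ℝ), ∀ i : Fin n,
        |(b i.castSucc + t * d i.castSucc) - (b i.succ + t * d i.succ)|
          = |b i.castSucc - b i.succ|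
            + t * dabs (b i.castSucc - b i.succ) (d i.castSucc - d i.succ) := by
      refine eventually_all.2 fun i => ?_
      filter_upwards [abs_ev (b i.castSucc - b i.succ) (d i.castSucc - d i.succ)] with t ht
      rw [show (b i.castSucc + t * d i.castSucc) - (b i.succ + t * d i.succ)
          = (b i.castSucc - b i.succ) + t * (d i.castSucc - d i.succ) from by ring, ht]
    have H3 : ∀ᶠ t in 𝓝[>] (0:ℝ), ∀ i : Fin n,
        max ((b i.castSucc + t * d i.castSucc) - (b i.succ + t * d i.succ)) 0
          = max (b i.castSucc - b i.succ) 0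
            + t * dmax (b i.castSucc - b i.succ) (d i.castSucc - d i.succ) := by
      refine eventually_all.2 fun i => ?_
      filter_upwards [max_ev (b i.castSucc - b i.succ) (d i.castSucc - d i.succ)] with t ht
      rw [show (b i.castSucc + t * d i.castSucc) - (b i.succ + t * d i.succ)
          = (b i.castSucc - b i.succ) + t * (d i.castSucc - d i.succ) from by ring, ht]
    filter_upwards [H1, H2, H3] with t h1 h2 h3
    have e0 : ∑ i, (y i - (b i + t * d i)) ^ 2
        = ∑ i, ((y i - b i) ^ 2 + t * (2 * ((b i - y i) * d i)) + t ^ 2 * d i ^ 2) :=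
      Finset.sum_congr rfl fun i _ => by ring
    have e1 : ∑ i, |b i + t * d i| = ∑ i, (|b i| + t * dabs (b i) (d i)) :=
      Finset.sum_congr rfl fun i _ => h1 i
    have e2 : ∑ i : Fin n, |(b i.castSucc + t * d i.castSucc) - (b i.succ + t * d i.succ)|
        = ∑ i : Fin n, (|b i.castSucc - b i.succ|
            + t * dabs (b i.castSucc - b i.succ) (d i.castSucc - d i.succ)) :=
      Finset.sum_congr rfl fun i _ => h2 i
    have e3 : ∑ i : Fin n, max ((b i.castSucc + t * d i.castSucc) - (b i.succ + t * d i.succ)) 0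
        = ∑ i : Fin n, (max (b i.castSucc - b i.succ) 0
            + t * dmax (b i.castSucc - b i.succ) (d i.castSucc - d i.succ)) :=
      Finset.sum_congr rfl fun i _ => h3 i
    unfold flni1 Phi
    rw [e0, e1, e2, e3]
    simp only [Finset.sum_add_distrib]
    rw [show (∑ x : Fin (n + 1), t * (2 * ((b x - y x) * d x)))
        = t * 2 * ∑ x : Fin (n + 1), (b x - y x) * d x from by
      rw [Finset.mul_sum]; exact Finset.sum_congr rfl fun i _ => by ring]
    rw [show (∑ x : Fin (n + 1), t ^ 2 * d x ^ 2) = t ^ 2 * ∑ x : Fin (n + 1), d x ^ 2 from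
      (Finset.mul_sum _ _ _).symm]
    rw [show (∑ x : Fin (n + 1), t * dabs (b x) (d x))
        = t * ∑ x : Fin (n + 1), dabs (b x) (d x) from (Finset.mul_sum _ _ _).symm]
    rw [show (∑ x : Fin n, t * dabs (b x.castSucc - b x.succ) (d x.castSucc - d x.succ))
        = t * ∑ x : Fin n, dabs (b x.castSucc - b x.succ) (d x.castSucc - d x.succ) from
      (Finset.mul_sum _ _ _).symm]
    rw [show (∑ x : Fin n, t * dmax (b x.castSucc - b x.succ) (d x.castSucc - d x.succ))
        = t * ∑ x : Fin n, dmax (b x.castSucc - b x.succ) (d x.castSucc - d x.succ) from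
      (Finset.mul_sum _ _ _).symm]
    ring
  have hge : ∀ᶠ t in 𝓝[>] (0:ℝ),
      0 ≤ Phi y lF lL lNI b d + t * ((1 / 2) * ∑ i, d i ^ 2) := by
    filter_upwards [hev, self_mem_nhdsWithin] with t ht ht0
    have hmin := hb fun i => b i + t * d i
    rw [ht] at hmin
    have h2 : t * 0 ≤ t * (Phi y lF lL lNI b d + t * ((1 / 2) * ∑ i, d i ^ 2)) := by
      rw [mul_zero]; nlinarith [hmin]
    exact le_of_mul_le_mul_left h2 ht0
  have htend : Tendsto (fun t : ℝ => Phi y lF lL lNI b d + t * ((1 / 2) * ∑ i, d i ^ 2))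
      (𝓝[>] 0) (𝓝 (Phi y lF lL lNI b d)) := by
    have : Tendsto (fun t : ℝ => Phi y lF lL lNI b d + t * ((1 / 2) * ∑ i, d i ^ 2))
        (𝓝 0) (𝓝 (Phi y lF lL lNI b d + 0 * ((1 / 2) * ∑ i, d i ^ 2))) :=
      (continuous_const.add (continuous_id.mul continuous_const)).tendsto 0
    simpa using this.mono_left nhdsWithin_le_nhds
  exact ge_of_tendsto htend hge


lemma phi_compare {n : ℕ} (y : Fin (n + 1) → ℝ) {lF lL lNI δ : ℝ}
    (hF : 0 ≤ lF) (hL : 0 ≤ lL) (hNI : 0 ≤ lNI) (hδ : 0 ≤ δ)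
    (b d : Fin (n + 1) → ℝ) :
    Phi y lF lL lNI b d ≤ Phi y lF (lL + δ) lNI (fun i => st δ (b i)) d := by
  have T1 : ∑ i, (st δ (b i) - y i) * d i
      = ∑ i, (b i - y i) * d i - ∑ i, (b i - st δ (b i)) * d i := by
    rw [← Finset.sum_sub_distrib]
    exact Finset.sum_congr rfl fun i _ => by ring
  have T2 : ∑ i : Fin n, dabs (b i.castSucc - b i.succ) (d i.castSucc - d i.succ)
      ≤ ∑ i : Fin n, dabs (st δ (b i.castSucc) - st δ (b i.succ)) (d i.castSucc - d i.succ) :=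
    Finset.sum_le_sum fun i _ => dabs_st_pair hδ _ _ _
  have T4 : ∑ i : Fin n, dmax (b i.castSucc - b i.succ) (d i.castSucc - d i.succ)
      ≤ ∑ i : Fin n, dmax (st δ (b i.castSucc) - st δ (b i.succ)) (d i.castSucc - d i.succ) :=
    Finset.sum_le_sum fun i _ => dmax_st_pair hδ _ _ _
  have T3 : lL * ∑ i, dabs (b i) (d i) + ∑ i, (b i - st δ (b i)) * d i
      ≤ (lL + δ) * ∑ i, dabs (st δ (b i)) (d i) := by
    rw [Finset.mul_sum, Finset.mul_sum, ← Finset.sum_add_distrib]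
    exact Finset.sum_le_sum fun i _ => st_key hδ hL _ _
  have m2 := mul_le_mul_of_nonneg_left T2 hF
  have m4 := mul_le_mul_of_nonneg_left T4 hNI
  unfold Phi
  rw [T1]
  linarith

lemma flni1_min_unique {n : ℕ} {y : Fin (n + 1) → ℝ} {lF lL lNI : ℝ}
    (hF : 0 ≤ lF) (hL : 0 ≤ lL) (hNI : 0 ≤ lNI) {u v : Fin (n + 1) → ℝ}
    (hu : ∀ β, flni1 y lF lL lNI u ≤ flni1 y lF lL lNI β)
    (hv : ∀ β, flni1 y lF lL lNI v ≤ flni1 y lF lL lNI β) : u = v := by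
  set m : Fin (n + 1) → ℝ := fun i => (u i + v i) / 2 with hm
  have Q : ∑ i, (y i - m i) ^ 2 + (1 / 4) * ∑ i, (u i - v i) ^ 2
      = (∑ i, (y i - u i) ^ 2 + ∑ i, (y i - v i) ^ 2) / 2 := by
    rw [Finset.mul_sum, ← Finset.sum_add_distrib, ← Finset.sum_add_distrib,
      Finset.sum_div]
    exact Finset.sum_congr rfl fun i _ => by simp only [hm]; ring
  have habs2 : ∀ a c : ℝ, |(a + c) / 2| ≤ (|a| + |c|) / 2 := by
    intro a c
    have h1 : |(a + c) / 2| = |a + c| / 2 := by rw [abs_div]; norm_num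
    have := abs_add_le a c
    linarith
  have hmax2 : ∀ a c : ℝ, max ((a + c) / 2) 0 ≤ (max a 0 + max c 0) / 2 := by
    intro a c
    apply max_le
    · have h1 := le_max_left a (0:ℝ); have h2 := le_max_left c (0:ℝ); linarith
    · have h1 := le_max_right a (0:ℝ); have h2 := le_max_right c (0:ℝ); linarith
  have A1 : ∑ i : Fin n, |m i.castSucc - m i.succ|
      ≤ (∑ i : Fin n, |u i.castSucc - u i.succ| + ∑ i : Fin n, |v i.castSucc - v i.succ|) / 2 := by
    rw [← Finset.sum_add_distrib, Finset.sum_div]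
    refine Finset.sum_le_sum fun i _ => ?_
    have h := habs2 (u i.castSucc - u i.succ) (v i.castSucc - v i.succ)
    rw [show (u i.castSucc - u i.succ + (v i.castSucc - v i.succ)) / 2
        = m i.castSucc - m i.succ from by simp only [hm]; ring] at h
    exact h
  have A2 : ∑ i, |m i| ≤ (∑ i, |u i| + ∑ i, |v i|) / 2 := by
    rw [← Finset.sum_add_distrib, Finset.sum_div]
    exact Finset.sum_le_sum fun i _ => habs2 (u i) (v i)
  have A3 : ∑ i : Fin n, max (m i.castSucc - m i.succ) 0
      ≤ (∑ i : Fin n, max (u i.castSucc - u i.succ) 0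
          + ∑ i : Fin n, max (v i.castSucc - v i.succ) 0) / 2 := by
    rw [← Finset.sum_add_distrib, Finset.sum_div]
    refine Finset.sum_le_sum fun i _ => ?_
    have h := hmax2 (u i.castSucc - u i.succ) (v i.castSucc - v i.succ)
    rw [show (u i.castSucc - u i.succ + (v i.castSucc - v i.succ)) / 2
        = m i.castSucc - m i.succ from by simp only [hm]; ring] at h
    exact h
  have m2 := mul_le_mul_of_nonneg_left A1 hF
  have m3 := mul_le_mul_of_nonneg_left A2 hL
  have m4 := mul_le_mul_of_nonneg_left A3 hNI
  have huv : flni1 y lF lL lNI u = flni1 y lF lL lNI v := le_antisymm (hu v) (hv u)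
  have hum := hu m
  have hS : ∑ i, (u i - v i) ^ 2 ≤ 0 := by
    unfold flni1 at huv hum
    nlinarith [Q, m2, m3, m4, hum, huv]
  have hS0 : ∀ i ∈ Finset.univ, (u i - v i) ^ 2 = 0 := by
    rw [← Finset.sum_eq_zero_iff_of_nonneg fun i _ => sq_nonneg (u i - v i)]
    exact le_antisymm hS (Finset.sum_nonneg fun i _ => sq_nonneg _)
  funext i
  have := hS0 i (Finset.mem_univ i)
  have h2 : u i - v i = 0 := by
    have := sq_eq_zero_iff.1 this
    exact this
  linarith

/-- Increasing the lasso penalty `λ_L` can only join constant regions of the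
one-dimensional fused lasso nearly-isotonic solution, not split them. -/
theorem lassoParam_joins_groups {n : ℕ} (y : Fin (n + 1) → ℝ)
    (lF lNI lL lL' : ℝ) (hF : 0 ≤ lF) (hNI : 0 ≤ lNI) (hL : 0 ≤ lL) (hLL : lL < lL')
    (b b' : Fin (n + 1) → ℝ)
    (hb : ∀ β, flni1 y lF lL lNI b ≤ flni1 y lF lL lNI β)
    (hb' : ∀ β, flni1 y lF lL' lNI b' ≤ flni1 y lF lL' lNI β)
    (i : Fin n) (hjoin : b i.castSucc = b i.succ) :
    b' i.castSucc = b' i.succ := by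
  have hδ : 0 ≤ lL' - lL := by linarith
  have hL' : 0 ≤ lL' := by linarith
  set c : Fin (n + 1) → ℝ := fun j => st (lL' - lL) (b j) with hc
  have hcmin : ∀ β, flni1 y lF lL' lNI c ≤ flni1 y lF lL' lNI β := by
    intro β
    have hA := flni1_ge y hF hL' hNI β c
    have hB := phi_nonneg hb fun j => β j - c j
    have hcmp := phi_compare y hF hL hNI hδ b fun j => β j - c j
    rw [show lL + (lL' - lL) = lL' from by ring] at hcmp
    rw [← hc] at hcmp
    linarith
  have hbc : b' = c := flni1_min_unique hF hL' hNI hb' hcmin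
  rw [hbc, hc]
  simp only [hjoin]
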